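/- arXiv:2501.15324 — 7 statements merged into one kernel-verified Lean document; each statement's English description precedes it below -/
import Mathlib

section
/- The static load balancing game is an exact potential game with potential Φ(a) = ∑_{j=1}^m (μ_j/2)((s_j^0 + ∑_{k=1}^n λ_k a_{kj})/μ_j)². That is, for every player i and any two action profiles (a_i, a_{-i}) and (a_i', a_{-i}) differing only in player i's action, Φ(a_i, a_{-i}) − Φ(a_i', a_{-i}) = D_i(a_i, a_{-i}) − D_i(a_i', a_{-i}). -/
open Finset

/-- Player `i`'s cost in the static load balancing game. -/
noncomputable def staticCost {n m : ℕ} (lam : Fin n → ℝ) (μ s0 : Fin m → ℝ)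
    (a : Fin n → Fin m → ℝ) (i : Fin n) : ℝ :=
  ∑ j, lam i * a i j *
    (lam i * a i j / (2 * μ j) + (s0 j + ∑ k ∈ univ.erase i, lam k * a k j) / μ j)

/-- The potential function of the static load balancing game. -/
noncomputable def staticPotential {n m : ℕ} (lam : Fin n → ℝ) (μ s0 : Fin m → ℝ)
    (a : Fin n → Fin m → ℝ) : ℝ :=
  ∑ j, μ j / 2 * ((s0 j + ∑ k, lam k * a k j) / μ j) ^ 2

/-- The static load balancing game is an exact potential game: for any player `i` and any
two action profiles differing only in player `i`'s action,
`Φ(a_i, a_{-i}) − Φ(a_i', a_{-i}) = D_i(a_i, a_{-i}) − D_i(a_i', a_{-i})`. -/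
theorem static_game_exact_potential {n m : ℕ} (lam : Fin n → ℝ) (μ s0 : Fin m → ℝ)
    (hμ : ∀ j, 0 < μ j) (hs0 : ∀ j, 0 ≤ s0 j) (hlam : ∀ i, 0 ≤ lam i)
    (a a' : Fin n → Fin m → ℝ) (i : Fin n)
    (ha : ∀ k j, 0 ≤ a k j) (ha1 : ∀ k, ∑ j, a k j = 1)
    (ha' : ∀ k j, 0 ≤ a' k j) (ha'1 : ∀ k, ∑ j, a' k j = 1)
    (hdiff : ∀ k, k ≠ i → a' k = a k) :
    staticPotential lam μ s0 a - staticPotential lam μ s0 a' =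
      staticCost lam μ s0 a i - staticCost lam μ s0 a' i := by
  unfold staticPotential staticCost
  rw [← Finset.sum_sub_distrib, ← Finset.sum_sub_distrib]
  apply Finset.sum_congr rfl
  intro j _
  have hsum : ∀ (b : Fin n → Fin m → ℝ), ∑ k, lam k * b k j
      = lam i * b i j + ∑ k ∈ univ.erase i, lam k * b k j := by
    intro b
    rw [← Finset.add_sum_erase _ _ (Finset.mem_univ i)]
  have herase : ∑ k ∈ univ.erase i, lam k * a' k j
      = ∑ k ∈ univ.erase i, lam k * a k j := by
    apply Finset.sum_congr rfl
    intro k hk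
    rw [hdiff k (Finset.ne_of_mem_erase hk)]
  rw [hsum a, hsum a', herase]
  have hμj : μ j ≠ 0 := (hμ j).ne'
  field_simp
  ring
end

section
/- For every player i and every action profile a, the potential function satisfies Φ(a_i, a_{-i}) = ∑_{j=1}^m (μ_j/2)(s_{ij}/μ_j)² + D_i(a_i, a_{-i}), where s_{ij} = s_j^0 + ∑_{k≠i} λ_k a_{kj}. -/
open Finset

/-- For every player `i` and every action profile `a`,
`Φ(a) = ∑_j (μ_j/2)(s_{ij}/μ_j)² + D_i(a)`, where `s_{ij} = s_j^0 + ∑_{k≠i} λ_k a_{kj}`. -/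
theorem potential_decomposition {n m : ℕ} (lam : Fin n → ℝ) (μ s0 : Fin m → ℝ)
    (hμ : ∀ j, 0 < μ j) (hs0 : ∀ j, 0 ≤ s0 j) (hlam : ∀ i, 0 ≤ lam i)
    (a : Fin n → Fin m → ℝ) (i : Fin n)
    (ha : ∀ k j, 0 ≤ a k j) (ha1 : ∀ k, ∑ j, a k j = 1) :
    staticPotential lam μ s0 a =
      (∑ j, μ j / 2 * ((s0 j + ∑ k ∈ univ.erase i, lam k * a k j) / μ j) ^ 2) +
        staticCost lam μ s0 a i := by
  unfold staticPotential staticCost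
  rw [← Finset.sum_add_distrib]
  refine Finset.sum_congr rfl fun j _ => ?_
  have hsplit : ∑ k, lam k * a k j
      = lam i * a i j + ∑ k ∈ univ.erase i, lam k * a k j := by
    rw [← Finset.add_sum_erase _ _ (mem_univ i)]
  rw [hsplit]
  have h := (hμ j).ne'
  field_simp
  ring
end

section
/- For each player i, the partial derivative of the potential function with respect to a_{ij} equals the partial derivative of player i's cost with respect to a_{ij}; both equal λ_i (λ_i a_{ij} + s_{ij})/μ_j. -/
open Finset

/-- The partial derivative of the potential with respect to `a_{ij}` equals the partial
derivative of player `i`'s cost with respect to `a_{ij}`; both equal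
`λ_i (λ_i a_{ij} + s_{ij})/μ_j`, where `s_{ij} = s_j^0 + ∑_{k≠i} λ_k a_{kj}`. -/
theorem potential_cost_partial_deriv {n m : ℕ} (lam : Fin n → ℝ) (μ s0 : Fin m → ℝ)
    (hμ : ∀ j, 0 < μ j) (a : Fin n → Fin m → ℝ) (i : Fin n) (j : Fin m) :
    HasDerivAt
        (fun t => staticPotential lam μ s0 (Function.update a i (Function.update (a i) j t)))
        (lam i * (lam i * a i j + (s0 j + ∑ k ∈ univ.erase i, lam k * a k j)) / μ j)
        (a i j) ∧
      HasDerivAt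
        (fun t => staticCost lam μ s0 (Function.update a i (Function.update (a i) j t)) i)
        (lam i * (lam i * a i j + (s0 j + ∑ k ∈ univ.erase i, lam k * a k j)) / μ j)
        (a i j) := by
  have hμj : μ j ≠ 0 := (hμ j).ne'
  set S : ℝ := s0 j + ∑ k ∈ univ.erase i, lam k * a k j with hS
  -- update lemmas
  have hupd_ne : ∀ (t : ℝ) (k : Fin n) (j' : Fin m), j' ≠ j →
      Function.update a i (Function.update (a i) j t) k j' = a k j' := by
    intro t k j' hj'
    rcases eq_or_ne k i with rfl | hk
    · simp [Function.update_apply, hj']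
    · simp [Function.update_apply, hk]
  have hupd_ne' : ∀ (t : ℝ) (k : Fin n), k ≠ i →
      Function.update a i (Function.update (a i) j t) k = a k := by
    intro t k hk; simp [Function.update_apply, hk]
  have hupd_i : ∀ (t : ℝ),
      Function.update a i (Function.update (a i) j t) i j = t := by
    intro t; simp
  constructor
  · -- potential
    have hfun : (fun t => staticPotential lam μ s0
          (Function.update a i (Function.update (a i) j t)))
        = fun t => (∑ j' ∈ univ.erase j,
            μ j' / 2 * ((s0 j' + ∑ k, lam k * a k j') / μ j') ^ 2)
          + μ j / 2 * ((S + lam i * t) / μ j) ^ 2 := by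
      funext t
      unfold staticPotential
      rw [← Finset.sum_erase_add _ _ (Finset.mem_univ j)]
      congr 1
      · apply Finset.sum_congr rfl
        intro j' hj'
        have hne : j' ≠ j := (Finset.mem_erase.mp hj').1
        have : (∑ k, lam k * Function.update a i (Function.update (a i) j t) k j')
            = ∑ k, lam k * a k j' :=
          Finset.sum_congr rfl fun k _ => by rw [hupd_ne t k j' hne]
        rw [this]
      · have : (∑ k, lam k * Function.update a i (Function.update (a i) j t) k j)
            = lam i * t + ∑ k ∈ univ.erase i, lam k * a k j := by
          rw [← Finset.add_sum_erase _ _ (Finset.mem_univ i), hupd_i]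
          congr 1
          exact Finset.sum_congr rfl fun k hk => by
            rw [hupd_ne' t k (Finset.mem_erase.mp hk).1]
        rw [this, hS]
        ring_nf
    rw [hfun]
    have hlin : HasDerivAt (fun t : ℝ => lam i * t) (lam i) (a i j) := by
      simpa using (hasDerivAt_id (a i j)).const_mul (lam i)
    have h : HasDerivAt (fun t : ℝ => μ j / 2 * ((S + lam i * t) / μ j) ^ 2)
        (μ j / 2 * (2 * ((S + lam i * a i j) / μ j) ^ 1 * (lam i / μ j))) (a i j) :=
      (((hlin.const_add S).div_const (μ j)).pow 2).const_mul (μ j / 2)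
    have h2 := h.const_add (∑ j' ∈ univ.erase j,
        μ j' / 2 * ((s0 j' + ∑ k, lam k * a k j') / μ j') ^ 2)
    refine h2.congr_deriv ?_
    field_simp
    ring
  · -- cost
    have hfun : (fun t => staticCost lam μ s0
          (Function.update a i (Function.update (a i) j t)) i)
        = fun t => (∑ j' ∈ univ.erase j, lam i * a i j' *
            (lam i * a i j' / (2 * μ j') + (s0 j' + ∑ k ∈ univ.erase i, lam k * a k j') / μ j'))
          + lam i * t * (lam i * t / (2 * μ j) + S / μ j) := by
      funext t
      unfold staticCost
      rw [← Finset.sum_erase_add _ _ (Finset.mem_univ j)]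
      congr 1
      · apply Finset.sum_congr rfl
        intro j' hj'
        have hne : j' ≠ j := (Finset.mem_erase.mp hj').1
        rw [hupd_ne t i j' hne]
        have : (∑ k ∈ univ.erase i, lam k * Function.update a i (Function.update (a i) j t) k j')
            = ∑ k ∈ univ.erase i, lam k * a k j' :=
          Finset.sum_congr rfl fun k hk => by
            rw [hupd_ne' t k (Finset.mem_erase.mp hk).1]
        rw [this]
      · rw [hupd_i]
        have : (∑ k ∈ univ.erase i, lam k * Function.update a i (Function.update (a i) j t) k j)
            = ∑ k ∈ univ.erase i, lam k * a k j :=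
          Finset.sum_congr rfl fun k hk => by
            rw [hupd_ne' t k (Finset.mem_erase.mp hk).1]
        rw [this, hS]
    rw [hfun]
    have h1 : HasDerivAt (fun t : ℝ => lam i * t) (lam i) (a i j) := by
      simpa using (hasDerivAt_id (a i j)).const_mul (lam i)
    have h2 : HasDerivAt (fun t : ℝ => lam i * t / (2 * μ j) + S / μ j)
        (lam i / (2 * μ j)) (a i j) := by
      have := (h1.div_const (2 * μ j)).add_const (S / μ j)
      simpa using this
    have h := (h1.mul h2).const_add (∑ j' ∈ univ.erase j, lam i * a i j' *
        (lam i * a i j' / (2 * μ j') + (s0 j' + ∑ k ∈ univ.erase i, lam k * a k j') / μ j'))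
    refine h.congr_deriv ?_
    field_simp
    ring
end

section
/- Let μ_1,…,μ_m > 0 and let r_j = s_{ij}/μ_j denote the inverse available processing rates, sorted so that r_1 ≤ r_2 ≤ … ≤ r_m. Let c be an index with 2 ≤ c ≤ m+1 such that r_j (∑_{k<c} μ_k) ≤ λ_i + ∑_{k<c} μ_k r_k for all j < c, and (if c ≤ m) λ_i + ∑_{k<c} μ_k r_k ≤ r_c (∑_{k<c} μ_k). Define a_{ij} = (μ_j/λ_i)((λ_i + ∑_{k<c} μ_k r_k)/(∑_{k<c} μ_k) − r_j) for j < c and a_{ij} = 0 for j ≥ c. Then a_i lies in the probability simplex (entries nonnegative, summing to 1) and minimizes D_i(a_i) = ∑_j λ_i a_{ij}(λ_i a_{ij}/(2μ_j) + r_j) over the simplex. -/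
open Finset

/-- Best response characterization (Lemma 2): with servers (0-indexed) sorted by
increasing inverse available processing rate `r`, and `c` (1-based, `2 ≤ c ≤ m+1`) a cut
index such that the KKT conditions hold, the allocation sending
`a_{ij} = (μ_j/λ_i)((λ_i + ∑_{k<c} μ_k r_k)/(∑_{k<c} μ_k) − r_j)` to servers `j < c` and
`0` to the rest lies in the probability simplex and minimizes
`D_i(a_i) = ∑_j λ_i a_{ij}(λ_i a_{ij}/(2μ_j) + r_j)` over the simplex. -/
theorem best_response_optimal {m : ℕ} (lam : ℝ) (μ r : Fin m → ℝ) (c : ℕ)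
    (hlam : 0 < lam) (hμ : ∀ j, 0 < μ j) (hr : ∀ j, 0 ≤ r j) (hsort : Monotone r)
    (hc1 : 2 ≤ c) (hc2 : c ≤ m + 1)
    (hactive : ∀ j : Fin m, (j : ℕ) < c - 1 →
      r j * (∑ k ∈ univ.filter fun k : Fin m => (k : ℕ) < c - 1, μ k) ≤
        lam + ∑ k ∈ univ.filter fun k : Fin m => (k : ℕ) < c - 1, μ k * r k)
    (hcut : ∀ j : Fin m, (j : ℕ) = c - 1 →
      lam + (∑ k ∈ univ.filter fun k : Fin m => (k : ℕ) < c - 1, μ k * r k) ≤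
        r j * ∑ k ∈ univ.filter fun k : Fin m => (k : ℕ) < c - 1, μ k)
    (a : Fin m → ℝ)
    (ha : ∀ j : Fin m, a j =
      if (j : ℕ) < c - 1 then
        μ j / lam *
          ((lam + ∑ k ∈ univ.filter fun k : Fin m => (k : ℕ) < c - 1, μ k * r k) /
              (∑ k ∈ univ.filter fun k : Fin m => (k : ℕ) < c - 1, μ k) - r j)
      else 0) :
    (∀ j, 0 ≤ a j) ∧ (∑ j, a j = 1) ∧
      ∀ b : Fin m → ℝ, (∀ j, 0 ≤ b j) → (∑ j, b j = 1) →
        (∑ j, lam * a j * (lam * a j / (2 * μ j) + r j)) ≤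
          ∑ j, lam * b j * (lam * b j / (2 * μ j) + r j) := by
  have hm : 0 < m := by omega
  set P : Finset (Fin m) := univ.filter fun k : Fin m => (k : ℕ) < c - 1 with hP
  set S := ∑ k ∈ P, μ k with hS
  set R := ∑ k ∈ P, μ k * r k with hR
  have h0P : (⟨0, hm⟩ : Fin m) ∈ P := by
    simp only [hP, Finset.mem_filter, Finset.mem_univ, true_and]
    omega
  have hSpos : 0 < S := Finset.sum_pos' (fun k _ => (hμ k).le) ⟨_, h0P, hμ _⟩
  set T := (lam + R) / S with hT
  have hST : S * T = lam + R := by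
    rw [hT]; field_simp
  have hTr : ∀ j : Fin m, (j : ℕ) < c - 1 → r j ≤ T := by
    intro j hj
    rw [hT, le_div_iff₀ hSpos]
    exact hactive j hj
  have hrT : ∀ j : Fin m, ¬ ((j : ℕ) < c - 1) → T ≤ r j := by
    intro j hj
    have hcm : c - 1 < m := by omega
    have h := hcut ⟨c - 1, hcm⟩ rfl
    have h1 : T ≤ r ⟨c - 1, hcm⟩ := by
      rw [hT, div_le_iff₀ hSpos]
      linarith [h]
    exact h1.trans (hsort (by simp [Fin.le_def]; omega))
  have hmem : ∀ j : Fin m, j ∈ P ↔ (j : ℕ) < c - 1 := by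
    intro j; simp [hP]
  -- nonnegativity
  have hnn : ∀ j, 0 ≤ a j := by
    intro j
    rw [ha j]
    by_cases hj : (j : ℕ) < c - 1
    · rw [if_pos hj]
      have := hTr j hj
      have h2 : (0:ℝ) ≤ T - r j := by linarith
      exact mul_nonneg (div_nonneg (hμ j).le hlam.le) h2
    · rw [if_neg hj]
  -- explicit form on P
  have haP : ∀ j : Fin m, (j : ℕ) < c - 1 → a j = μ j / lam * (T - r j) := by
    intro j hj; rw [ha j, if_pos hj]
  have ha0 : ∀ j : Fin m, ¬ ((j : ℕ) < c - 1) → a j = 0 := by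
    intro j hj; rw [ha j, if_neg hj]
  -- sum = 1
  have hsum : ∑ j, a j = 1 := by
    rw [← Finset.sum_subset (Finset.subset_univ P)
      (fun j _ hj => ha0 j (by rwa [hmem] at hj))]
    have h1 : ∑ j ∈ P, a j = ∑ j ∈ P, (μ j * T / lam - μ j * r j / lam) := by
      refine Finset.sum_congr rfl fun j hj => ?_
      rw [haP j ((hmem j).mp hj)]
      field_simp
    rw [h1, Finset.sum_sub_distrib, ← Finset.sum_div, ← Finset.sum_div,
      ← Finset.sum_mul, ← hS, ← hR, hST]
    field_simp; ring
  refine ⟨hnn, hsum, ?_⟩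
  intro b hb hbsum
  -- gradient
  set g : Fin m → ℝ := fun j => lam * a j / μ j + r j with hg
  have hgT : ∀ j : Fin m, (j : ℕ) < c - 1 → g j = T := by
    intro j hj
    have h1 : lam * (μ j / lam * (T - r j)) / μ j = T - r j := by
      field_simp
      exact mul_div_cancel_left₀ _ (hμ j).ne'
    rw [hg]
    simp only
    rw [haP j hj, h1]
    ring
  have hgge : ∀ j, T ≤ g j := by
    intro j
    by_cases hj : (j : ℕ) < c - 1
    · rw [hgT j hj]
    · rw [hg]; simp only [ha0 j hj]
      have := hrT j hj
      simp only [mul_zero, zero_div]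
      linarith
  have hdiff : ∀ j : Fin m,
      lam * b j * (lam * b j / (2 * μ j) + r j) - lam * a j * (lam * a j / (2 * μ j) + r j)
        = lam ^ 2 * (b j - a j) ^ 2 / (2 * μ j) + lam * (b j - a j) * g j := by
    intro j
    have hμj := (hμ j).ne'
    rw [hg]; field_simp; ring
  have key : 0 ≤ ∑ j, (lam ^ 2 * (b j - a j) ^ 2 / (2 * μ j) + lam * (b j - a j) * g j) := by
    have hlin : ∑ j, lam * (b j - a j) * g j
        = lam * ∑ j, (b j - a j) * (g j - T) + lam * T * (∑ j, b j - ∑ j, a j) := by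
      rw [Finset.mul_sum, ← Finset.sum_sub_distrib, Finset.mul_sum, ← Finset.sum_add_distrib]
      refine Finset.sum_congr rfl fun j _ => by ring
    have hquad : 0 ≤ ∑ j, lam ^ 2 * (b j - a j) ^ 2 / (2 * μ j) := by
      refine Finset.sum_nonneg fun j _ => ?_
      have := (hμ j)
      positivity
    have hlin2 : 0 ≤ ∑ j, (b j - a j) * (g j - T) := by
      refine Finset.sum_nonneg fun j _ => ?_
      by_cases hj : (j : ℕ) < c - 1
      · rw [hgT j hj]; simp
      · have h1 : 0 ≤ g j - T := by linarith [hgge j]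
        have h2 : 0 ≤ b j - a j := by rw [ha0 j hj]; simpa using hb j
        exact mul_nonneg h2 h1
    rw [Finset.sum_add_distrib, hlin, hsum, hbsum]
    simp only [sub_self, mul_zero, add_zero]
    have : 0 ≤ lam * ∑ j, (b j - a j) * (g j - T) := mul_nonneg hlam.le hlin2
    linarith
  have hsplit : ∑ j, lam * b j * (lam * b j / (2 * μ j) + r j)
      - ∑ j, lam * a j * (lam * a j / (2 * μ j) + r j)
      = ∑ j, (lam ^ 2 * (b j - a j) ^ 2 / (2 * μ j) + lam * (b j - a j) * g j) := by
    rw [← Finset.sum_sub_distrib]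
    exact Finset.sum_congr rfl fun j _ => hdiff j
  linarith [hsplit, key]
end

section
/- If a is a pure Nash equilibrium of the static load balancing game, then the normalized load L_j(a) = (s_j^0 + ∑_{i=1}^n λ_i a_{ij})/μ_j is the same for every server j in the support S(a) = {j : a_{ij} > 0 for some i}, and this common value equals L = (∑_{ℓ ∈ S(a)} s_ℓ^0 + ∑_{i=1}^n λ_i)/(∑_{ℓ ∈ S(a)} μ_ℓ). -/
open Finset

lemma sum_sub_two {m : ℕ} (f g : Fin m → ℝ) (j l : Fin m) (hjl : j ≠ l)
    (h : ∀ t, t ≠ j → t ≠ l → f t = g t) :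
    (∑ t, f t) - (∑ t, g t) = (f j - g j) + (f l - g l) := by
  rw [← Finset.sum_sub_distrib]
  have hc : ∀ t ∈ (univ : Finset (Fin m)), f t - g t =
      (if t = j then f j - g j else 0) + (if t = l then f l - g l else 0) := by
    intro t _
    by_cases h1 : t = j
    · subst h1; simp [hjl]
    · by_cases h2 : t = l
      · subst h2; simp [h1]
      · simp [h1, h2, h t h1 h2]
  rw [Finset.sum_congr rfl hc, Finset.sum_add_distrib]
  simp

lemma key_ineq {n m : ℕ} (lam : Fin n → ℝ) (μ s0 : Fin m → ℝ)
    (hμ : ∀ j, 0 < μ j) (hlam : ∀ i, 0 < lam i)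
    (a : Fin n → Fin m → ℝ)
    (ha : ∀ i j, 0 ≤ a i j)
    (hNE : ∀ i : Fin n, ∀ b : Fin m → ℝ, (∀ j, 0 ≤ b j) → (∑ j, b j = 1) →
      staticCost lam μ s0 a i ≤ staticCost lam μ s0 (Function.update a i b) i)
    (ha1 : ∀ i, ∑ j, a i j = 1)
    (i : Fin n) (j l : Fin m) (hij : 0 < a i j) :
    (s0 j + ∑ k, lam k * a k j) / μ j ≤ (s0 l + ∑ k, lam k * a k l) / μ l := by
  by_cases hjl : j = l
  · subst hjl; exact le_refl _
  by_contra hlt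
  push_neg at hlt
  set Lj := (s0 j + ∑ k, lam k * a k j) / μ j with hLjdef
  set Ll := (s0 l + ∑ k, lam k * a k l) / μ l with hLldef
  set C := lam i * (1 / (2 * μ l) + 1 / (2 * μ j)) with hCdef
  have hμj := hμ j
  have hμl := hμ l
  have hli := hlam i
  have hCpos : 0 < C := by positivity
  have hLL : 0 < Lj - Ll := by linarith
  set ε := min (a i j) ((Lj - Ll) / (2 * C)) with hεdef
  have hεpos : 0 < ε := lt_min hij (by positivity)
  have hεle : ε ≤ a i j := min_le_left _ _
  have hεmin : ε ≤ (Lj - Ll) / (2 * C) := min_le_right _ _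
  clear_value ε
  clear hεdef
  clear_value Lj Ll C
  -- the deviation
  set b : Fin m → ℝ := fun t => a i t + (if t = l then ε else 0) - (if t = j then ε else 0)
    with hbdef
  have hbj : b j = a i j - ε := by simp [hbdef, hjl]
  have hbl : b l = a i l + ε := by simp [hbdef, Ne.symm hjl]
  have hbt : ∀ t, t ≠ j → t ≠ l → b t = a i t := by
    intro t h1 h2; simp [hbdef, h1, h2]
  have hb0 : ∀ t, 0 ≤ b t := by
    intro t
    by_cases h1 : t = j
    · rw [h1, hbj]; linarith
    · by_cases h2 : t = l
      · rw [h2, hbl]; have := ha i l; linarith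
      · rw [hbt t h1 h2]; exact ha i t
  have hb1 : ∑ t, b t = 1 := by
    simp [hbdef, Finset.sum_add_distrib, Finset.sum_sub_distrib, ha1 i]
  have h0 := hNE i b hb0 hb1
  -- rewrite the updated cost
  have hupd : staticCost lam μ s0 (Function.update a i b) i =
      ∑ t, lam i * b t *
        (lam i * b t / (2 * μ t) + (s0 t + ∑ k ∈ univ.erase i, lam k * a k t) / μ t) := by
    unfold staticCost
    refine Finset.sum_congr rfl fun t _ => ?_
    have h1 : ∑ k ∈ univ.erase i, lam k * Function.update a i b k t =
        ∑ k ∈ univ.erase i, lam k * a k t :=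
      Finset.sum_congr rfl fun k hk => by
        rw [Function.update_of_ne (Finset.ne_of_mem_erase hk)]
    rw [Function.update_self, h1]
  rw [hupd] at h0
  unfold staticCost at h0
  have hdiff := sum_sub_two
    (fun t => lam i * b t *
      (lam i * b t / (2 * μ t) + (s0 t + ∑ k ∈ univ.erase i, lam k * a k t) / μ t))
    (fun t => lam i * a i t *
      (lam i * a i t / (2 * μ t) + (s0 t + ∑ k ∈ univ.erase i, lam k * a k t) / μ t))
    j l hjl (fun t h1 h2 => by simp only [hbt t h1 h2])
  have hkey : 0 ≤
      (lam i * b j * (lam i * b j / (2 * μ j) + (s0 j + ∑ k ∈ univ.erase i, lam k * a k j) / μ j)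
        - lam i * a i j * (lam i * a i j / (2 * μ j) + (s0 j + ∑ k ∈ univ.erase i, lam k * a k j) / μ j))
      + (lam i * b l * (lam i * b l / (2 * μ l) + (s0 l + ∑ k ∈ univ.erase i, lam k * a k l) / μ l)
        - lam i * a i l * (lam i * a i l / (2 * μ l) + (s0 l + ∑ k ∈ univ.erase i, lam k * a k l) / μ l)) := by
    linarith [h0, hdiff]
  have hSj : ∑ k ∈ univ.erase i, lam k * a k j = (∑ k, lam k * a k j) - lam i * a i j :=
    Finset.sum_erase_eq_sub (mem_univ i)
  have hSl : ∑ k ∈ univ.erase i, lam k * a k l = (∑ k, lam k * a k l) - lam i * a i l :=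
    Finset.sum_erase_eq_sub (mem_univ i)
  rw [hbj, hbl, hSj, hSl] at hkey
  -- factor the difference
  have hfact :
      (lam i * (a i j - ε) * (lam i * (a i j - ε) / (2 * μ j) + (s0 j + ((∑ k, lam k * a k j) - lam i * a i j)) / μ j)
        - lam i * a i j * (lam i * a i j / (2 * μ j) + (s0 j + ((∑ k, lam k * a k j) - lam i * a i j)) / μ j))
      + (lam i * (a i l + ε) * (lam i * (a i l + ε) / (2 * μ l) + (s0 l + ((∑ k, lam k * a k l) - lam i * a i l)) / μ l)
        - lam i * a i l * (lam i * a i l / (2 * μ l) + (s0 l + ((∑ k, lam k * a k l) - lam i * a i l)) / μ l))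
      = lam i * ε * ((Ll - Lj) + C * ε) := by
    rw [hLjdef, hLldef, hCdef]
    field_simp
    ring
  rw [hfact] at hkey
  -- deduce Lj ≤ Ll + C * ε
  have hq : 0 ≤ (Ll - Lj) + C * ε :=
    le_of_mul_le_mul_left (by simpa using hkey) (mul_pos hli hεpos)
  clear hkey hdiff h0 hupd hfact hb0 hb1
  have hCε : C * ε ≤ (Lj - Ll) / 2 := by
    have h1 : ε ≤ (Lj - Ll) / (2 * C) := hεmin
    have h2 : C * ε ≤ C * ((Lj - Ll) / (2 * C)) := by
      exact mul_le_mul_of_nonneg_left h1 hCpos.le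
    have h3 : C * ((Lj - Ll) / (2 * C)) = (Lj - Ll) / 2 := by
      field_simp
    linarith
  linarith

/-- At any pure Nash equilibrium `a`, the normalized load
`L_j(a) = (s_j^0 + ∑_i λ_i a_{ij})/μ_j` is the same for every server `j` in the support
`S(a) = {j : a_{ij} > 0 for some i}`, and equals
`(∑_{ℓ∈S(a)} s_ℓ^0 + ∑_i λ_i)/(∑_{ℓ∈S(a)} μ_ℓ)`. -/
theorem NE_equal_normalized_loads {n m : ℕ} (lam : Fin n → ℝ) (μ s0 : Fin m → ℝ)
    (hμ : ∀ j, 0 < μ j) (hs0 : ∀ j, 0 ≤ s0 j) (hlam : ∀ i, 0 < lam i)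
    (a : Fin n → Fin m → ℝ)
    (ha : ∀ i j, 0 ≤ a i j) (ha1 : ∀ i, ∑ j, a i j = 1)
    (hNE : ∀ i : Fin n, ∀ b : Fin m → ℝ, (∀ j, 0 ≤ b j) → (∑ j, b j = 1) →
      staticCost lam μ s0 a i ≤ staticCost lam μ s0 (Function.update a i b) i) :
    ∀ j ∈ univ.filter fun j : Fin m => ∃ i, 0 < a i j,
      (s0 j + ∑ i, lam i * a i j) / μ j =
        ((∑ l ∈ univ.filter fun l : Fin m => ∃ i, 0 < a i l, s0 l) + ∑ i, lam i) /
          ∑ l ∈ univ.filter fun l : Fin m => ∃ i, 0 < a i l, μ l := by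
  intro j hj
  set S : Finset (Fin m) := univ.filter fun l : Fin m => ∃ i, 0 < a i l with hSdef
  have hjS : j ∈ S := hj
  obtain ⟨i0, hi0⟩ := (Finset.mem_filter.1 hjS).2
  have hLeq : ∀ l ∈ S, (s0 l + ∑ k, lam k * a k l) / μ l =
      (s0 j + ∑ k, lam k * a k j) / μ j := by
    intro l hl
    obtain ⟨i1, hi1⟩ := (Finset.mem_filter.1 hl).2
    exact le_antisymm
      (key_ineq lam μ s0 hμ hlam a ha hNE ha1 i1 l j hi1)
      (key_ineq lam μ s0 hμ hlam a ha hNE ha1 i0 j l hi0)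
  have hμS : 0 < ∑ l ∈ S, μ l := Finset.sum_pos (fun l _ => hμ l) ⟨j, hjS⟩
  have hsum : ∑ l ∈ S, (s0 l + ∑ k, lam k * a k l) =
      ((s0 j + ∑ k, lam k * a k j) / μ j) * ∑ l ∈ S, μ l := by
    rw [Finset.mul_sum]
    refine Finset.sum_congr rfl fun l hl => ?_
    rw [← hLeq l hl]
    exact (div_mul_cancel₀ _ (hμ l).ne').symm
  have hmass : ∑ l ∈ S, (s0 l + ∑ k, lam k * a k l) =
      (∑ l ∈ S, s0 l) + ∑ k, lam k := by
    rw [Finset.sum_add_distrib]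
    congr 1
    rw [Finset.sum_comm]
    refine Finset.sum_congr rfl fun k _ => ?_
    rw [← Finset.mul_sum]
    have h1 : ∑ l ∈ S, a k l = 1 := by
      rw [← ha1 k]
      refine Finset.sum_subset (Finset.subset_univ S) ?_
      intro l _ hlS
      have : ¬∃ i, 0 < a i l := by
        intro hcon
        exact hlS (Finset.mem_filter.2 ⟨Finset.mem_univ l, hcon⟩)
      push_neg at this
      exact le_antisymm (this k) (ha k l)
    rw [h1, mul_one]
  rw [← hmass, hsum, mul_div_cancel_right₀ _ hμS.ne']
end

section
/- In the static load balancing game, for any pure Nash equilibrium a' and any action profile a*, the social cost of a' satisfies SC(a') ≤ SC(a*) + ∑_{i=1}^n ∑_{j=1}^m λ_i a*_{ij} (s_j^0 + ∑_{k=1}^n λ_k a'_{kj})/μ_j. -/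
open Finset

/-- Social cost of an action profile. -/
noncomputable def socialCost {n m : ℕ} (lam : Fin n → ℝ) (μ s0 : Fin m → ℝ)
    (a : Fin n → Fin m → ℝ) : ℝ :=
  ∑ i, staticCost lam μ s0 a i

/-- For any pure NE `a'` and any action profile `a*`:
`SC(a') ≤ SC(a*) + ∑_i ∑_j λ_i a*_{ij} (s_j^0 + ∑_k λ_k a'_{kj})/μ_j`. -/
theorem NE_social_cost_bound {n m : ℕ} (lam : Fin n → ℝ) (μ s0 : Fin m → ℝ)
    (hμ : ∀ j, 0 < μ j) (hs0 : ∀ j, 0 ≤ s0 j) (hlam : ∀ i, 0 < lam i)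
    (a' astar : Fin n → Fin m → ℝ)
    (ha' : ∀ i j, 0 ≤ a' i j) (ha'1 : ∀ i, ∑ j, a' i j = 1)
    (hastar : ∀ i j, 0 ≤ astar i j) (hastar1 : ∀ i, ∑ j, astar i j = 1)
    (hNE : ∀ i : Fin n, ∀ b : Fin m → ℝ, (∀ j, 0 ≤ b j) → (∑ j, b j = 1) →
      staticCost lam μ s0 a' i ≤ staticCost lam μ s0 (Function.update a' i b) i) :
    socialCost lam μ s0 a' ≤
      socialCost lam μ s0 astar +
        ∑ i, ∑ j, lam i * astar i j * ((s0 j + ∑ k, lam k * a' k j) / μ j) := by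
  have key : ∀ i, staticCost lam μ s0 a' i ≤ staticCost lam μ s0 astar i +
      ∑ j, lam i * astar i j * ((s0 j + ∑ k, lam k * a' k j) / μ j) := by
    intro i
    have hposij : ∀ j, 0 ≤ lam i * astar i j :=
      fun j => mul_nonneg (hlam i).le (hastar i j)
    have step1 : staticCost lam μ s0 a' i ≤
        ∑ j, lam i * astar i j *
          (lam i * astar i j / (2 * μ j) +
            (s0 j + ∑ k ∈ univ.erase i, lam k * a' k j) / μ j) := by
      have h := hNE i (astar i) (hastar i) (hastar1 i)
      have : staticCost lam μ s0 (Function.update a' i (astar i)) i =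
          ∑ j, lam i * astar i j *
            (lam i * astar i j / (2 * μ j) +
              (s0 j + ∑ k ∈ univ.erase i, lam k * a' k j) / μ j) := by
        unfold staticCost
        refine Finset.sum_congr rfl fun j _ => ?_
        have h1 : ∀ k ∈ univ.erase i,
            lam k * Function.update a' i (astar i) k j = lam k * a' k j :=
          fun k hk => by rw [Function.update_of_ne (mem_erase.mp hk).1]
        rw [Function.update_self, Finset.sum_congr rfl h1]
      rwa [this] at h
    have step2 : ∀ j, lam i * astar i j *
          (lam i * astar i j / (2 * μ j) +
            (s0 j + ∑ k ∈ univ.erase i, lam k * a' k j) / μ j) ≤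
        lam i * astar i j * (lam i * astar i j / (2 * μ j)) +
          lam i * astar i j * ((s0 j + ∑ k, lam k * a' k j) / μ j) := by
      intro j
      rw [mul_add]
      have hsum : ∑ k ∈ univ.erase i, lam k * a' k j ≤ ∑ k, lam k * a' k j :=
        Finset.sum_le_sum_of_subset_of_nonneg (Finset.subset_univ _)
          (fun k _ _ => mul_nonneg (hlam k).le (ha' k j))
      have hB : (s0 j + ∑ k ∈ univ.erase i, lam k * a' k j) / μ j ≤
          (s0 j + ∑ k, lam k * a' k j) / μ j :=
        (div_le_div_iff_of_pos_right (hμ j)).mpr (by linarith)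
      exact add_le_add_right (mul_le_mul_of_nonneg_left hB (hposij j)) _
    have step3 : ∑ j, lam i * astar i j * (lam i * astar i j / (2 * μ j)) ≤
        staticCost lam μ s0 astar i := by
      unfold staticCost
      refine Finset.sum_le_sum fun j _ => ?_
      have h1 : 0 ≤ (s0 j + ∑ k ∈ univ.erase i, lam k * astar k j) / μ j := by
        apply div_nonneg _ (hμ j).le
        have : 0 ≤ ∑ k ∈ univ.erase i, lam k * astar k j :=
          Finset.sum_nonneg fun k _ => mul_nonneg (hlam k).le (hastar k j)
        linarith [hs0 j]
      nlinarith [hposij j]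
    calc staticCost lam μ s0 a' i ≤ _ := step1
      _ ≤ ∑ j, (lam i * astar i j * (lam i * astar i j / (2 * μ j)) +
            lam i * astar i j * ((s0 j + ∑ k, lam k * a' k j) / μ j)) :=
          Finset.sum_le_sum fun j _ => step2 j
      _ = (∑ j, lam i * astar i j * (lam i * astar i j / (2 * μ j))) +
            ∑ j, lam i * astar i j * ((s0 j + ∑ k, lam k * a' k j) / μ j) :=
          Finset.sum_add_distrib
      _ ≤ _ := by linarith [step3]
  unfold socialCost
  rw [← Finset.sum_add_distrib]
  exact Finset.sum_le_sum fun i _ => key i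
end

section
/- The price of anarchy of the static load balancing game is at most 1 + 2(max_{j∈[m]} s_j^0/μ_j + (∑_{i=1}^n λ_i)/μ_min)(∑_{j=1}^m μ_j)/(∑_{i=1}^n λ_i), where μ_min = min_j μ_j; i.e., for any pure Nash equilibrium a' and any profile a*, SC(a') ≤ [1 + 2(max_j s_j^0/μ_j + ∑_i λ_i/μ_min)(∑_j μ_j / ∑_i λ_i)] · SC(a*). -/
open Finset

/-- Price of anarchy bound: for any pure NE `a'` and any profile `a*`,
`SC(a') ≤ (1 + 2(max_j s_j^0/μ_j + ∑_i λ_i/μ_min)(∑_j μ_j / ∑_i λ_i)) SC(a*)`. -/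
theorem price_of_anarchy_bound {n m : ℕ} (hn : 0 < n) (hm : 0 < m)
    (lam : Fin n → ℝ) (μ s0 : Fin m → ℝ)
    (hμ : ∀ j, 0 < μ j) (hs0 : ∀ j, 0 ≤ s0 j) (hlam : ∀ i, 0 < lam i)
    (a' astar : Fin n → Fin m → ℝ)
    (ha' : ∀ i j, 0 ≤ a' i j) (ha'1 : ∀ i, ∑ j, a' i j = 1)
    (hastar : ∀ i j, 0 ≤ astar i j) (hastar1 : ∀ i, ∑ j, astar i j = 1)
    (hNE : ∀ i : Fin n, ∀ b : Fin m → ℝ, (∀ j, 0 ≤ b j) → (∑ j, b j = 1) →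
      staticCost lam μ s0 a' i ≤ staticCost lam μ s0 (Function.update a' i b) i) :
    socialCost lam μ s0 a' ≤
      (1 + 2 *
          ((univ.sup' (univ_nonempty_iff.mpr (Fin.pos_iff_nonempty.mp hm))
              fun j => s0 j / μ j) +
            (∑ i, lam i) /
              (univ.inf' (univ_nonempty_iff.mpr (Fin.pos_iff_nonempty.mp hm)) μ)) *
          ((∑ j, μ j) / ∑ i, lam i)) *
        socialCost lam μ s0 astar := by
  have hmne : (univ : Finset (Fin m)).Nonempty :=
    univ_nonempty_iff.mpr (Fin.pos_iff_nonempty.mp hm)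
  have hnne : (univ : Finset (Fin n)).Nonempty :=
    univ_nonempty_iff.mpr (Fin.pos_iff_nonempty.mp hn)
  set μmin : ℝ := univ.inf' hmne μ with hμmindef
  set Smax : ℝ := univ.sup' hmne (fun j => s0 j / μ j) with hSmaxdef
  set Λ : ℝ := ∑ i, lam i with hΛdef
  set S : ℝ := ∑ j, μ j with hSdef
  set M : ℝ := Smax + Λ / μmin with hMdef
  have hΛ : 0 < Λ := Finset.sum_pos (fun i _ => hlam i) hnne
  have hS : 0 < S := Finset.sum_pos (fun j _ => hμ j) hmne
  have hμmin : 0 < μmin := (Finset.lt_inf'_iff hmne).mpr (fun j _ => hμ j)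
  have hSmax0 : 0 ≤ Smax := by
    obtain ⟨j⟩ := Fin.pos_iff_nonempty.mp hm
    exact le_trans (div_nonneg (hs0 j) (hμ j).le) (Finset.le_sup' (fun j => s0 j / μ j) (mem_univ j))
  have hM : 0 ≤ M := by positivity
  -- each a' i j ≤ 1
  have ha'le1 : ∀ (k : Fin n) (j : Fin m), a' k j ≤ 1 := by
    intro k j
    calc a' k j ≤ ∑ j', a' k j' :=
          Finset.single_le_sum (fun j' _ => ha' k j') (mem_univ j)
      _ = 1 := ha'1 k
  -- Upper bound: SC(a') ≤ Λ * M
  have upper : socialCost lam μ s0 a' ≤ Λ * M := by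
    have hstep : ∀ i, staticCost lam μ s0 a' i ≤ lam i * M := by
      intro i
      have h1 : staticCost lam μ s0 a' i ≤ ∑ j, lam i * a' i j * M := by
        unfold staticCost
        refine Finset.sum_le_sum fun j _ => ?_
        refine mul_le_mul_of_nonneg_left ?_ (mul_nonneg (hlam i).le (ha' i j))
        rw [add_div]
        have hs0le : s0 j / μ j ≤ Smax := Finset.le_sup' (fun j => s0 j / μ j) (mem_univ j)
        have hrest : (∑ k ∈ univ.erase i, lam k * a' k j) ≤ ∑ k ∈ univ.erase i, lam k :=
          Finset.sum_le_sum fun k _ => by nlinarith [hlam k, ha' k j, ha'le1 k j]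
        have hnum : lam i * a' i j / 2 + (∑ k ∈ univ.erase i, lam k * a' k j) ≤ Λ := by
          have h2 : lam i * a' i j / 2 ≤ lam i := by nlinarith [hlam i, ha' i j, ha'le1 i j]
          have h3 : lam i + ∑ k ∈ univ.erase i, lam k = Λ :=
            Finset.add_sum_erase univ lam (mem_univ i)
          linarith
        have hdiv : lam i * a' i j / (2 * μ j) + (∑ k ∈ univ.erase i, lam k * a' k j) / μ j
            ≤ Λ / μmin := by
          have he : lam i * a' i j / (2 * μ j) + (∑ k ∈ univ.erase i, lam k * a' k j) / μ j
              = (lam i * a' i j / 2 + ∑ k ∈ univ.erase i, lam k * a' k j) / μ j := by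
            field_simp
          rw [he]
          exact div_le_div₀ hΛ.le hnum hμmin (Finset.inf'_le _ (mem_univ j))
        rw [hMdef]
        linarith
      calc staticCost lam μ s0 a' i ≤ ∑ j, lam i * a' i j * M := h1
        _ = lam i * M := by
            rw [← Finset.sum_mul, ← Finset.mul_sum, ha'1 i, mul_one]
    calc socialCost lam μ s0 a' = ∑ i, staticCost lam μ s0 a' i := rfl
      _ ≤ ∑ i, lam i * M := Finset.sum_le_sum fun i _ => hstep i
      _ = Λ * M := by rw [← Finset.sum_mul]
  -- Lower bound: SC(a*) ≥ Λ² / (2S)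
  set L : Fin m → ℝ := fun j => ∑ i, lam i * astar i j with hLdef
  have hL0 : ∀ j, 0 ≤ L j := fun j =>
    Finset.sum_nonneg fun i _ => mul_nonneg (hlam i).le (hastar i j)
  have hLsum : ∑ j, L j = Λ := by
    rw [hLdef, Finset.sum_comm]
    simp only [← Finset.mul_sum, hastar1, mul_one, hΛdef]
  have lower1 : ∑ j, L j ^ 2 / (2 * μ j) ≤ socialCost lam μ s0 astar := by
    unfold socialCost staticCost
    rw [Finset.sum_comm]
    refine Finset.sum_le_sum fun j _ => ?_
    have herase : ∀ i : Fin n, ∑ k ∈ univ.erase i, lam k * astar k j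
        = L j - lam i * astar i j := by
      intro i
      rw [Finset.sum_erase_eq_sub (mem_univ i), hLdef]
    have expand : ∀ i : Fin n,
        lam i * astar i j * (lam i * astar i j / (2 * μ j)
          + (s0 j + ∑ k ∈ univ.erase i, lam k * astar k j) / μ j)
        = lam i * astar i j * s0 j / μ j + lam i * astar i j * L j / μ j
          - (lam i * astar i j) ^ 2 / (2 * μ j) := by
      intro i
      rw [herase i]
      field_simp
      ring
    have hsum : ∑ i, lam i * astar i j * (lam i * astar i j / (2 * μ j)
          + (s0 j + ∑ k ∈ univ.erase i, lam k * astar k j) / μ j)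
        = L j * s0 j / μ j + L j * L j / μ j
          - (∑ i, (lam i * astar i j) ^ 2) / (2 * μ j) := by
      rw [Finset.sum_congr rfl fun i _ => expand i, Finset.sum_sub_distrib,
        Finset.sum_add_distrib, ← Finset.sum_div, ← Finset.sum_div, ← Finset.sum_div,
        ← Finset.sum_mul, ← Finset.sum_mul, hLdef]
    rw [hsum]
    have hsq : ∑ i, (lam i * astar i j) ^ 2 ≤ L j ^ 2 := by
      rw [hLdef]
      exact Finset.sum_sq_le_sq_sum_of_nonneg
        fun i _ => mul_nonneg (hlam i).le (hastar i j)
    have h1 : (∑ i, (lam i * astar i j) ^ 2) / (2 * μ j) ≤ L j ^ 2 / (2 * μ j) := by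
      have h2μ : (0:ℝ) < 2 * μ j := by have := hμ j; linarith
      exact (div_le_div_iff_of_pos_right h2μ).mpr hsq
    have h2 : 0 ≤ L j * s0 j / μ j := div_nonneg (mul_nonneg (hL0 j) (hs0 j)) (hμ j).le
    have h3 : L j * L j / μ j = L j ^ 2 / (2 * μ j) + L j ^ 2 / (2 * μ j) := by
      field_simp
      ring
    linarith
  have lower2 : Λ ^ 2 / (2 * S) ≤ ∑ j, L j ^ 2 / (2 * μ j) := by
    have := Finset.sq_sum_div_le_sum_sq_div univ L
      (g := fun j => 2 * μ j) (fun j _ => by show (0:ℝ) < 2 * μ j; have := hμ j; linarith)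
    rw [hLsum] at this
    calc Λ ^ 2 / (2 * S) = Λ ^ 2 / ∑ j, 2 * μ j := by
          rw [← Finset.mul_sum, hSdef]
      _ ≤ _ := this
  have lower : Λ ^ 2 / (2 * S) ≤ socialCost lam μ s0 astar := le_trans lower2 lower1
  -- Combine
  have hB0 : 0 ≤ socialCost lam μ s0 astar := le_trans (by positivity) lower
  set A := socialCost lam μ s0 a'
  set B := socialCost lam μ s0 astar
  have hΛ2 : Λ ^ 2 ≤ 2 * S * B := by
    rw [div_le_iff₀ (by positivity)] at lower
    linarith
  rw [show (1 + 2 * (Smax + Λ / μmin) * (S / Λ)) = 1 + 2 * M * (S / Λ) from rfl]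
  rw [← mul_le_mul_iff_of_pos_right hΛ]
  have hexp : (1 + 2 * M * (S / Λ)) * B * Λ = B * Λ + 2 * M * S * B := by
    field_simp
  rw [hexp]
  nlinarith [mul_nonneg hB0 hΛ.le, mul_le_mul_of_nonneg_left hΛ2 hM]
end
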